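/- arXiv:1505.05642 — 5 statements merged into one kernel-verified Lean document; each statement's English description precedes it below -/
import Mathlib

section
/- For every integer q ≥ 2 and every integer k ≥ 1, the Z_q-Simplex code S_k(q) is an [n_k, k, d_k] Z_q-linear code, i.e. it has length n_k = (q^k − 1)/(q − 1), exactly q^k codewords, and minimum Hamming distance d_k = (q/p)(p − 1)·n_{k−1} + 1, where p > 1 is the smallest divisor of q and n_{k−1} = (q^{k−1} − 1)/(q − 1). -/
/-- Hamming weight of a word over `ZMod q`: the number of nonzero coordinates. -/
def wt {q : ℕ} (l : List (ZMod q)) : ℕ := l.countP (fun x => decide (x ≠ 0))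

/-- The word `(c, α, c + α·𝟏, c + 2α·𝟏, …, c + (q−1)α·𝟏)`, where `𝟏` is the
all-ones vector of the same length as `c`. -/
def simplexWord (q : ℕ) (α : ZMod q) (c : List (ZMod q)) : List (ZMod q) :=
  c ++ α :: (List.range (q - 1)).flatMap (fun i => c.map (fun x => x + ((i + 1 : ℕ) : ZMod q) * α))

/-- The `ZMod q`-Simplex code `S_k(q)` of dimension `k`, as a set of words (lists):
`S_1(q) = ZMod q` (as length-1 words) and
`S_k(q) = {(c, α, c + α·𝟏, …, c + (q−1)α·𝟏) : c ∈ S_{k-1}(q), α ∈ ZMod q}`. -/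
def simplex (q : ℕ) : ℕ → Set (List (ZMod q))
  | 0 => {[]}
  | k + 1 => {w | ∃ c ∈ simplex q k, ∃ α : ZMod q, w = simplexWord q α c}

/-- The word `(α, c + α·𝟏, c + 2α·𝟏, …, c + (q−1)α·𝟏)`. -/
def macWord (q : ℕ) (α : ZMod q) (c : List (ZMod q)) : List (ZMod q) :=
  α :: (List.range (q - 1)).flatMap (fun i => c.map (fun x => x + ((i + 1 : ℕ) : ZMod q) * α))

/-- The `ZMod q`-MacDonald code `M_{k,k-1}(q)`, as a set of words:
`M_{k,k-1}(q) = {(α, c + α·𝟏, …, c + (q−1)α·𝟏) : α ∈ ZMod q, c ∈ S_{k-1}(q)}`. -/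
def macdonald (q k : ℕ) : Set (List (ZMod q)) :=
  {w | ∃ α : ZMod q, ∃ c ∈ simplex q (k - 1), w = macWord q α c}


/-!
A word of `S_{k+1}(q)` is `(c, α, c + α·𝟏, …, c + (q−1)α·𝟏)` with `c ∈ S_k(q)`, so each coordinate
`x` of `c` yields the `q` coordinates `x + yα`, `y ∈ ZMod q`. If `α = 0` the weight is `q · wt c`
and induction applies. If `α ≠ 0`, the `y` with `x + yα = 0` form a coset of the annihilator of
`α`, which has `q / ord(α)` elements; since `ord(α)` is a divisor `> 1` of `q`, it is at least
`p = q.minFac`. Hence the weight is at least `(q − q/p)·n_k + 1 = (q/p)(p − 1)·n_k + 1`, and this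
is attained by `c = 0`, `α = q/p`, whose additive order is exactly `p`.
-/

open Finset

theorem minFac_card_le_addOrderOf {G : Type*} [AddGroup G] [Fintype G] {g : G} (hg : g ≠ 0) :
    (Fintype.card G).minFac ≤ addOrderOf g := by
  refine Nat.minFac_le_of_dvd ?_ addOrderOf_dvd_card
  have := (isOfFinAddOrder_of_finite g).addOrderOf_pos
  have : addOrderOf g ≠ 1 := by rwa [Ne, AddMonoid.addOrderOf_eq_one_iff]
  omega

theorem card_filter_add_mul_eq_zero_le {R : Type*} [Ring R] [Fintype R] [DecidableEq R]
    (x α : R) : #{y | x + y * α = 0} ≤ #{y | y * α = 0} := by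
  obtain h | ⟨y₀, hy₀⟩ := (filter (fun y => x + y * α = 0) univ).eq_empty_or_nonempty
  · simp [h]
  · rw [mem_filter] at hy₀
    refine card_le_card_of_injOn (· - y₀) (fun y hy => ?_) sub_left_injective.injOn
    simp only [coe_filter, mem_univ, true_and, Set.mem_ofPred_eq] at hy ⊢
    rw [sub_mul, sub_eq_zero]
    exact add_left_cancel (hy.trans hy₀.2.symm)

namespace ZMod

variable {q : ℕ}

theorem addOrderOf_natCast_div {d : ℕ} (hd : d ∣ q) (hq : q ≠ 0) :
    addOrderOf ((q / d : ℕ) : ZMod q) = d := by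
  rw [addOrderOf_coe _ hq, Nat.gcd_eq_right (Nat.div_dvd_of_dvd hd), Nat.div_div_self hd hq]

variable [NeZero q]

theorem sum_range_natCast {M : Type*} [AddCommMonoid M] (g : ZMod q → M) :
    ∑ i ∈ range q, g i = ∑ y, g y :=
  sum_nbij' (↑) val (by simp) (by simp [val_lt]) (fun i hi => val_cast_of_lt (mem_range.1 hi))
    (fun y _ => natCast_zmod_val y) (fun _ _ => rfl)

theorem card_filter_mul_eq_zero_mul_addOrderOf (α : ZMod q) :
    #{y : ZMod q | y * α = 0} * addOrderOf α = q := by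
  let f := AddMonoidHom.mulRight α
  have hrange : f.range = AddSubgroup.zmultiples α := by
    ext z
    simp only [AddMonoidHom.mem_range, AddMonoidHom.coe_mulRight, AddSubgroup.mem_zmultiples_iff,
      f]
    constructor
    · rintro ⟨y, rfl⟩
      exact ⟨y.cast, by simp⟩
    · rintro ⟨n, rfl⟩
      exact ⟨n, by simp⟩
  have hker : #{y : ZMod q | y * α = 0} = Nat.card f.ker := by
    rw [← Fintype.card_subtype, ← Nat.card_eq_fintype_card]; rfl
  rw [hker, ← Nat.card_zmultiples, ← hrange, ← AddSubgroup.index_ker f,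
    AddSubgroup.card_mul_index, Nat.card_zmod]

theorem card_filter_mul_ne_zero (α : ZMod q) :
    #{y : ZMod q | y * α ≠ 0} = q - q / addOrderOf α := by
  have hsplit := card_filter_add_card_filter_not (s := univ) (fun y : ZMod q => y * α = 0)
  have hker : #{y : ZMod q | y * α = 0} = q / addOrderOf α :=
    Nat.eq_div_of_mul_eq_left (addOrderOf_pos α).ne' (card_filter_mul_eq_zero_mul_addOrderOf α)
  simp only [card_univ, ZMod.card, hker] at hsplit
  simp only [ne_eq]
  omega

theorem card_filter_mul_eq_zero_le_div_minFac {α : ZMod q} (hα : α ≠ 0) :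
    #{y : ZMod q | y * α = 0} ≤ q / q.minFac := by
  have hmin : q.minFac ≤ addOrderOf α := by
    simpa using minFac_card_le_addOrderOf hα
  rw [Nat.eq_div_of_mul_eq_left (addOrderOf_pos α).ne' (card_filter_mul_eq_zero_mul_addOrderOf α)]
  exact Nat.div_le_div_left hmin q.minFac_pos

theorem sub_div_minFac_le_card_filter_add_mul_ne_zero (x : ZMod q) {α : ZMod q} (hα : α ≠ 0) :
    q - q / q.minFac ≤ #{y : ZMod q | x + y * α ≠ 0} := by
  have hsplit := card_filter_add_card_filter_not (s := univ) (fun y : ZMod q => x + y * α = 0)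
  have := card_filter_add_mul_eq_zero_le x α
  have := card_filter_mul_eq_zero_le_div_minFac hα
  simp only [card_univ, ZMod.card] at hsplit
  simp only [ne_eq]
  omega

end ZMod

section Weight

variable {q : ℕ}

theorem wt_cons (a : ZMod q) (l : List (ZMod q)) :
    wt (a :: l) = wt l + if a = 0 then 0 else 1 := by
  simp [wt, List.countP_cons]

theorem sum_wt_map {ι : Type*} (s : Finset ι) (f : ι → ZMod q → ZMod q) (c : List (ZMod q)) :
    ∑ i ∈ s, wt (c.map (f i)) = (c.map fun x => #{i ∈ s | f i x ≠ 0}).sum := by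
  induction c with
  | nil => simp [wt]
  | cons a c ih =>
    simp only [List.map_cons, wt_cons, sum_add_distrib, ih, List.sum_cons, sum_ite, sum_const_zero,
      sum_const, smul_eq_mul, mul_one, zero_add]
    rw [add_comm]

variable [NeZero q]

-- The leading block `c` of the word is the `y = 0` term of the sum.
theorem wt_simplexWord (α : ZMod q) (c : List (ZMod q)) :
    wt (simplexWord q α c) = wt [α] + ∑ y : ZMod q, wt (c.map (· + y * α)) := by
  obtain ⟨n, rfl⟩ : ∃ n, q = n + 1 := Nat.exists_eq_add_one.2 (NeZero.pos q)
  rw [← ZMod.sum_range_natCast (fun y => wt (c.map (· + y * α))), sum_range_succ']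
  simp [wt, simplexWord, List.countP_cons, List.countP_flatMap, Function.comp_def,
    sum_eq_multiset_sum, Multiset.range]
  omega

theorem wt_simplexWord_zero (c : List (ZMod q)) : wt (simplexWord q 0 c) = q * wt c := by
  rw [wt_simplexWord]
  simp [wt]

theorem le_wt_simplexWord (c : List (ZMod q)) {α : ZMod q} (hα : α ≠ 0) :
    (q - q / q.minFac) * c.length + 1 ≤ wt (simplexWord q α c) := by
  rw [wt_simplexWord, sum_wt_map, add_comm]
  gcongr
  · simp [wt, hα]
  · have := List.card_nsmul_le_sum (c.map fun x => #{y : ZMod q | x + y * α ≠ 0})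
      (q - q / q.minFac) fun n hn => by
        obtain ⟨x, -, rfl⟩ := List.mem_map.1 hn
        exact ZMod.sub_div_minFac_le_card_filter_add_mul_ne_zero x hα
    rwa [List.length_map, smul_eq_mul, mul_comm] at this

theorem wt_simplexWord_replicate_zero (α : ZMod q) (n : ℕ) :
    wt (simplexWord q α (List.replicate n 0)) = wt [α] + (q - q / addOrderOf α) * n := by
  rw [wt_simplexWord, sum_wt_map]
  simp only [List.map_replicate, zero_add, ZMod.card_filter_mul_ne_zero, List.sum_replicate,
    smul_eq_mul]
  ring

end Weight

section Simplex

variable {q : ℕ}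

theorem simplexWord_inj {α β : ZMod q} {c d : List (ZMod q)} (hlen : c.length = d.length) :
    simplexWord q α c = simplexWord q β d ↔ α = β ∧ c = d := by
  refine ⟨fun h => ?_, by rintro ⟨rfl, rfl⟩; rfl⟩
  obtain ⟨rfl, h⟩ := List.append_inj h hlen
  exact ⟨(List.cons_eq_cons.1 h).1, rfl⟩

theorem simplex_succ (k : ℕ) :
    simplex q (k + 1) = (fun p : ZMod q × List (ZMod q) => simplexWord q p.1 p.2) ''
      (Set.univ ×ˢ simplex q k) := by
  ext w
  simp only [simplex, Set.mem_ofPred_eq, Set.mem_image, Set.mem_prod, Set.mem_univ, true_and,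
    Prod.exists]
  exact ⟨fun ⟨c, hc, α, h⟩ => ⟨α, c, hc, h.symm⟩, fun ⟨α, c, hc, h⟩ => ⟨c, hc, α, h.symm⟩⟩

variable [NeZero q]

theorem length_simplexWord (α : ZMod q) (c : List (ZMod q)) :
    (simplexWord q α c).length = q * c.length + 1 := by
  obtain ⟨n, rfl⟩ : ∃ n, q = n + 1 := Nat.exists_eq_add_one.2 (NeZero.pos q)
  simp [simplexWord, add_mul, add_comm, add_left_comm]

theorem length_of_mem_simplex {k : ℕ} {w : List (ZMod q)} (hw : w ∈ simplex q k) :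
    w.length = ∑ i ∈ range k, q ^ i := by
  induction k generalizing w with
  | zero => simp_all [simplex]
  | succ k ih =>
    obtain ⟨c, hc, α, rfl⟩ := hw
    rw [length_simplexWord, ih hc, geom_sum_succ]

theorem ncard_simplex (k : ℕ) : (simplex q k).ncard = q ^ k := by
  induction k with
  | zero => simp [simplex]
  | succ k ih =>
    rw [simplex_succ, Set.InjOn.ncard_image, Set.ncard_prod, ih, Set.ncard_univ, Nat.card_zmod,
      pow_succ']
    rintro ⟨α, c⟩ ⟨-, hc⟩ ⟨β, d⟩ ⟨-, hd⟩ h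
    rw [simplexWord_inj ((length_of_mem_simplex hc).trans (length_of_mem_simplex hd).symm)] at h
    exact Prod.ext h.1 h.2

theorem simplexWord_zero_replicate_zero (n : ℕ) :
    simplexWord q 0 (List.replicate n 0) = List.replicate (q * n + 1) 0 := by
  rw [List.eq_replicate_iff, length_simplexWord, List.length_replicate]
  simp [simplexWord, List.mem_replicate, or_imp]

theorem replicate_zero_mem_simplex (k : ℕ) :
    List.replicate (∑ i ∈ range k, q ^ i) (0 : ZMod q) ∈ simplex q k := by
  induction k with
  | zero => simp [simplex]
  | succ k ih => exact ⟨_, ih, 0, by rw [simplexWord_zero_replicate_zero, geom_sum_succ]⟩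

theorem le_wt_of_mem_simplex {k : ℕ} {w : List (ZMod q)} (hw : w ∈ simplex q (k + 1))
    (hw0 : wt w ≠ 0) : (q - q / q.minFac) * ∑ i ∈ range k, q ^ i + 1 ≤ wt w := by
  induction k generalizing w with
  | zero => simpa [Nat.one_le_iff_ne_zero] using hw0
  | succ k ih =>
    obtain ⟨c, hc, α, rfl⟩ := hw
    by_cases hα : α = 0
    · subst hα
      rw [wt_simplexWord_zero] at hw0 ⊢
      have hc0 : (q - q / q.minFac) * ∑ i ∈ range k, q ^ i + 1 ≤ wt c :=
        ih hc (right_ne_zero_of_mul hw0)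
      have hq : q - q / q.minFac + 1 ≤ q := by
        have := Nat.div_pos (Nat.minFac_le (NeZero.pos q)) q.minFac_pos
        have := Nat.div_le_self q q.minFac
        omega
      calc (q - q / q.minFac) * ∑ i ∈ range (k + 1), q ^ i + 1
          = q * ((q - q / q.minFac) * ∑ i ∈ range k, q ^ i) + (q - q / q.minFac + 1) := by
            rw [geom_sum_succ]; ring
        _ ≤ q * ((q - q / q.minFac) * ∑ i ∈ range k, q ^ i + 1) := by rw [mul_add_one]; gcongr
        _ ≤ q * wt c := by gcongr
    · simpa [length_of_mem_simplex hc] using le_wt_simplexWord c hα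

theorem exists_mem_simplex_wt_eq (hq : q ≠ 1) (k : ℕ) :
    ∃ w ∈ simplex q (k + 1), wt w = (q - q / q.minFac) * ∑ i ∈ range k, q ^ i + 1 := by
  have hord : addOrderOf ((q / q.minFac : ℕ) : ZMod q) = q.minFac :=
    ZMod.addOrderOf_natCast_div q.minFac_dvd (NeZero.ne q)
  have hα : ((q / q.minFac : ℕ) : ZMod q) ≠ 0 := fun h =>
    hq (Nat.minFac_eq_one_iff.1 (by rw [← hord, h, addOrderOf_zero]))
  refine ⟨simplexWord q (q / q.minFac : ℕ) _, ⟨_, replicate_zero_mem_simplex k, _, rfl⟩, ?_⟩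
  rw [wt_simplexWord_replicate_zero, hord]
  simp [wt, hα, add_comm]

end Simplex

/-- The `ZMod q`-Simplex code of dimension `k` is an
`[(q^k − 1)/(q − 1), k, (q/p)(p − 1)·n_{k−1} + 1]` `ZMod q`-linear code, where
`p > 1` is the smallest divisor of `q` (i.e. `q.minFac`). -/
theorem simplex_params (q k : ℕ) (hq : 2 ≤ q) (hk : 1 ≤ k) :
    (∀ w ∈ simplex q k, w.length = (q ^ k - 1) / (q - 1)) ∧
    (simplex q k).ncard = q ^ k ∧
    IsLeast {m | ∃ w ∈ simplex q k, wt w ≠ 0 ∧ wt w = m}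
      ((q / q.minFac) * (q.minFac - 1) * ((q ^ (k - 1) - 1) / (q - 1)) + 1) := by
  obtain ⟨k, rfl⟩ := Nat.exists_eq_add_one.2 hk
  have : NeZero q := ⟨by omega⟩
  have hd : q / q.minFac * (q.minFac - 1) = q - q / q.minFac := by
    rw [Nat.mul_sub_one, Nat.div_mul_cancel q.minFac_dvd]
  simp only [← Nat.geomSum_eq hq, Nat.add_sub_cancel, hd]
  refine ⟨fun w hw => length_of_mem_simplex hw, ncard_simplex _, ?_, ?_⟩
  · obtain ⟨w, hw, hwt⟩ := exists_mem_simplex_wt_eq (by omega : q ≠ 1) k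
    exact ⟨w, hw, by omega, hwt⟩
  · rintro m ⟨w, hw, hw0, rfl⟩
    exact le_wt_of_mem_simplex hw hw0
end

section
/- For every integer q ≥ 2, the weight distribution {A_i} of the Z_q-Simplex code S_2(q) of dimension 2 is: A_0 = 1; A_q = q·φ(q) + q − 1; A_{q − q/d + 1} = d·φ(d) for every divisor d of q with d ≠ 1 and d ≠ q; and A_{q+1} = q(q − 1) − Σ_{d | q, d ≠ 1} d·φ(d), where φ is Euler's totient function. -/
/-!
The codeword indexed by `(β, α)` is `(β, α, β + α, …, β + (q-1)α)`. Its zero coordinates among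
`β + xα` (`x ∈ ZMod q`) are the solutions of `xα = -β`, a coset of the kernel of `x ↦ xα`: there
are `q / d` of them if `β ∈ ⟨α⟩`, where `d` is the additive order of `α`, and none otherwise.
So the weight only depends on `d` and on whether `β ∈ ⟨α⟩`: it is `0` or `q` for `α = 0`, and
`q + 1 - q/d` or `q + 1` otherwise. As `ZMod q` has `φ d` elements of order `d` for each `d ∣ q`,
and `⟨α⟩` has `d` elements, `A_t` is a sum over the divisors of `q`, which is evaluated for each
of the four weights; the last one uses `∑_{d ∣ q} φ d = q`.
-/

open Finset

theorem AddMonoidHom.card_fiber_mul_card_range {G H : Type*} [AddGroup G] [Fintype G] [AddGroup H]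
    [DecidableEq H] (f : G →+ H) {y : H} (hy : y ∈ Set.range f) :
    #{x | f x = y} * Nat.card f.range = Fintype.card G := by
  rw [card_fiber_eq_of_mem_range f hy ⟨0, map_zero f⟩, ← AddSubgroup.index_ker,
    ← Nat.card_eq_fintype_card, ← f.ker.card_mul_index, ← Fintype.card_subtype,
    Nat.card_eq_fintype_card]
  exact congrArg (· * _) (Fintype.card_congr (Equiv.refl _))

section CyclicSums

variable {G M : Type*} [AddGroup G] [Fintype G] [AddCommMonoid M]

theorem sum_ite_mem_zmultiples (α : G) [DecidablePred (· ∈ AddSubgroup.zmultiples α)]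
    (a b : M) :
    ∑ β : G, (if β ∈ AddSubgroup.zmultiples α then a else b) =
      addOrderOf α • a + (Fintype.card G - addOrderOf α) • b := by
  have hcard : #{β | β ∈ AddSubgroup.zmultiples α} = addOrderOf α := by
    rw [← Nat.card_zmultiples, ← Fintype.card_subtype, Nat.card_eq_fintype_card]
  have hsplit := card_filter_add_card_filter_not (s := univ) (· ∈ AddSubgroup.zmultiples α)
  rw [card_univ, hcard] at hsplit
  rw [sum_ite, sum_const, sum_const, hcard, ← hsplit, Nat.add_sub_cancel_left]

theorem sum_addOrderOf_eq_sum_divisors [IsAddCyclic G] (F : ℕ → M) :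
    ∑ α : G, F (addOrderOf α) = ∑ d ∈ (Fintype.card G).divisors, Nat.totient d • F d := by
  have hmaps : ∀ α ∈ (univ : Finset G), addOrderOf α ∈ (Fintype.card G).divisors := fun α _ =>
    Nat.mem_divisors.2 ⟨addOrderOf_dvd_card, Fintype.card_ne_zero⟩
  rw [← sum_fiberwise_of_maps_to' hmaps]
  refine sum_congr rfl fun d hd => ?_
  rw [sum_const, IsAddCyclic.card_addOrderOf_eq_totient (Nat.dvd_of_mem_divisors hd)]

end CyclicSums

theorem Nat.div_eq_one_iff_of_dvd {q d : ℕ} (hq : q ≠ 0) (hd : d ∣ q) : q / d = 1 ↔ d = q := by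
  rw [← Nat.div_self (Nat.pos_of_ne_zero hq), Nat.div_eq_iff_eq_of_dvd_dvd hq hd dvd_rfl]

theorem Nat.sum_divisors_ne_one_totient_mul_sub (n : ℕ) :
    ∑ d ∈ n.divisors.filter (fun d => d ≠ 1), Nat.totient d * (n - d) =
      n * (n - 1) - ∑ d ∈ n.divisors.filter (fun d => d ≠ 1), d * Nat.totient d := by
  have htotient : ∑ d ∈ n.divisors.filter (fun d => d ≠ 1), Nat.totient d = n - 1 := by
    rcases eq_or_ne n 0 with rfl | hn
    · simp
    have hsum := Nat.sum_totient n
    rw [← add_sum_erase _ _ (Nat.one_mem_divisors.2 hn), Nat.totient_one] at hsum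
    rw [filter_ne']
    omega
  calc ∑ d ∈ n.divisors.filter (fun d => d ≠ 1), Nat.totient d * (n - d)
      = ∑ d ∈ n.divisors.filter (fun d => d ≠ 1), (n * Nat.totient d - d * Nat.totient d) :=
        sum_congr rfl fun d _ => by rw [Nat.mul_sub, mul_comm _ n, mul_comm _ d]
    _ = ∑ d ∈ n.divisors.filter (fun d => d ≠ 1), n * Nat.totient d -
          ∑ d ∈ n.divisors.filter (fun d => d ≠ 1), d * Nat.totient d :=
        sum_tsub_distrib _ fun d hd =>
          Nat.mul_le_mul_right _ (Nat.divisor_le (mem_filter.1 hd).1)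
    _ = n * (n - 1) - ∑ d ∈ n.divisors.filter (fun d => d ≠ 1), d * Nat.totient d := by
        rw [← mul_sum, htotient]

namespace ZMod

variable {q : ℕ}

theorem range_mulRight (α : ZMod q) :
    (AddMonoidHom.mulRight α).range = AddSubgroup.zmultiples α := by
  ext c
  simp only [AddMonoidHom.mem_range, AddMonoidHom.coe_mulRight, AddSubgroup.mem_zmultiples_iff]
  constructor
  · rintro ⟨x, rfl⟩
    exact ⟨x.cast, by simp⟩
  · rintro ⟨k, rfl⟩
    exact ⟨k, by simp⟩

variable [NeZero q]

theorem card_filter_mul_eq (α c : ZMod q) :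
    #{x | x * α = c} = if c ∈ AddSubgroup.zmultiples α then q / addOrderOf α else 0 := by
  split_ifs with hc
  · have hc' : c ∈ Set.range (AddMonoidHom.mulRight α) := by
      rwa [← AddMonoidHom.coe_range, range_mulRight]
    have h := (AddMonoidHom.mulRight α).card_fiber_mul_card_range hc'
    rw [range_mulRight, Nat.card_zmultiples, ZMod.card] at h
    exact (Nat.div_eq_of_eq_mul_left (addOrderOf_pos α) h.symm).symm
  · rw [card_eq_zero, filter_eq_empty_iff]
    rintro x - rfl
    exact hc (by rw [← range_mulRight]; exact ⟨x, rfl⟩)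

theorem countP_range_eq_card_filter (p : ZMod q → Prop) [DecidablePred p] :
    (List.range q).countP (fun i : ℕ => decide (p i)) = #{x | p x} := by
  rw [← Multiset.coe_countP, Multiset.countP_eq_card_filter]
  change ((range q).filter fun i : ℕ => p i).card = _
  refine card_nbij' (fun i => (i : ZMod q)) (fun x => x.val) ?_ ?_ ?_ ?_
  · intro i; simp
  · intro x; simp [ZMod.val_lt]
  · intro i hi
    simp only [coe_filter, mem_range, Set.mem_ofPred_eq] at hi
    simp [ZMod.val_cast_of_lt hi.1]
  · intro x _; simp

end ZMod

theorem simplexWord_nil (q : ℕ) (α : ZMod q) : simplexWord q α [] = [α] := by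
  simp [simplexWord]

theorem simplexWord_singleton (q : ℕ) (α β : ZMod q) : simplexWord q α [β] =
    β :: α :: (List.range (q - 1)).map (fun i => β + ((i + 1 : ℕ) : ZMod q) * α) := by
  simp [simplexWord, List.map_eq_flatMap]

theorem simplexWord_singleton_injective (q : ℕ) :
    Function.Injective (fun p : ZMod q × ZMod q => simplexWord q p.2 [p.1]) := by
  rintro ⟨β, α⟩ ⟨β', α'⟩ h
  simp only [simplexWord_singleton, List.cons.injEq] at h
  exact Prod.ext h.1 h.2.1

theorem simplex_two_eq_range (q : ℕ) :
    simplex q 2 = Set.range (fun p : ZMod q × ZMod q => simplexWord q p.2 [p.1]) := by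
  ext w
  simp [simplex, simplexWord_nil, eq_comm]

theorem ncard_sep_simplex_two (q : ℕ) [NeZero q] (P : List (ZMod q) → Prop) [DecidablePred P] :
    {w ∈ simplex q 2 | P w}.ncard = #{p : ZMod q × ZMod q | P (simplexWord q p.2 [p.1])} := by
  rw [simplex_two_eq_range, ← Set.ncard_coe_finset]
  have himage : {w ∈ Set.range (fun p : ZMod q × ZMod q => simplexWord q p.2 [p.1]) | P w} =
      (fun p : ZMod q × ZMod q => simplexWord q p.2 [p.1]) '' {p | P (simplexWord q p.2 [p.1])} :=
    Set.image_preimage_eq_range_inter.symm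
  rw [himage, Set.ncard_image_of_injective _ (simplexWord_singleton_injective q)]
  simp

theorem wt_simplexWord_singleton {q : ℕ} [NeZero q] (α β : ZMod q) :
    wt (simplexWord q α [β]) = (if α = 0 then 0 else 1) + #{x | β + x * α ≠ 0} := by
  obtain ⟨n, rfl⟩ : ∃ n, q = n + 1 := Nat.exists_eq_add_one.2 (NeZero.pos q)
  rw [simplexWord_singleton, wt, ← ZMod.countP_range_eq_card_filter, List.range_succ_eq_map,
    Nat.add_sub_cancel, List.countP_cons, List.countP_cons, List.countP_cons, List.countP_map,
    List.countP_map]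
  simp only [Function.comp_def, Nat.cast_zero, zero_mul, add_zero, Nat.succ_eq_add_one]
  by_cases hα : α = 0 <;> simp [hα]
  omega

namespace SimplexTwo

-- The weight of the codeword indexed by `(β, α)` with `addOrderOf α = d`, according as
-- `β ∈ zmultiples α` or not.
def memWeight (q d : ℕ) : ℕ := if d = 1 then 0 else q + 1 - q / d

def nonmemWeight (q d : ℕ) : ℕ := if d = 1 then q else q + 1

theorem wt_simplexWord_singleton_eq_ite {q : ℕ} [NeZero q] (α β : ZMod q) :
    wt (simplexWord q α [β]) = if β ∈ AddSubgroup.zmultiples α then memWeight q (addOrderOf α)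
      else nonmemWeight q (addOrderOf α) := by
  have hzeros :
      #{x | β + x * α = 0} = if β ∈ AddSubgroup.zmultiples α then q / addOrderOf α else 0 := by
    have hneg : #{x | β + x * α = 0} = #{x | x * α = -β} := by
      congr 1; ext x; simp [eq_neg_iff_add_eq_zero, add_comm]
    simp only [hneg, ZMod.card_filter_mul_eq, neg_mem_iff]
  have hsplit := card_filter_add_card_filter_not (s := univ) (fun x : ZMod q => β + x * α = 0)
  rw [card_univ, ZMod.card, hzeros] at hsplit
  have hle : q / addOrderOf α ≤ q := Nat.div_le_self q _
  simp only [wt_simplexWord_singleton, memWeight, nonmemWeight, AddMonoid.addOrderOf_eq_one_iff]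
  split_ifs at hsplit ⊢ <;> simp_all <;> omega

def weightCount (q t : ℕ) : ℕ :=
  ∑ d ∈ q.divisors, Nat.totient d *
    ((if memWeight q d = t then d else 0) + (if nonmemWeight q d = t then q - d else 0))

theorem ncard_wt_eq (q : ℕ) [NeZero q] (t : ℕ) :
    {w ∈ simplex q 2 | wt w = t}.ncard = weightCount q t := by
  rw [ncard_sep_simplex_two, card_filter, Fintype.sum_prod_type_right]
  simp only [wt_simplexWord_singleton_eq_ite, apply_ite (fun w => if w = t then 1 else 0)]
  simp only [sum_ite_mem_zmultiples, sum_addOrderOf_eq_sum_divisors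
    (fun d => d • (if memWeight q d = t then 1 else 0) +
      (q - d) • (if nonmemWeight q d = t then 1 else 0)), ZMod.card, weightCount]
  simp [smul_eq_mul, mul_ite]

theorem weightCount_zero {q : ℕ} (hq : q ≠ 0) : weightCount q 0 = 1 := by
  rw [weightCount, sum_eq_single_of_mem 1 (Nat.one_mem_divisors.2 hq)]
  · simp [memWeight, nonmemWeight, hq]
  · intro d _ hd1
    have := Nat.div_le_self q d
    simp [memWeight, nonmemWeight, hd1]
    omega

theorem weightCount_self {q : ℕ} (hq : 2 ≤ q) :
    weightCount q q = q * Nat.totient q + q - 1 := by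
  have hq0 : q ≠ 0 := by omega
  rw [weightCount, sum_eq_add_of_mem 1 q (Nat.one_mem_divisors.2 hq0)
    (Nat.mem_divisors_self q hq0) (by omega)]
  · simp [memWeight, nonmemWeight, Nat.div_self (Nat.pos_of_ne_zero hq0), show q ≠ 1 by omega,
      Ne.symm hq0, mul_comm]
    omega
  · rintro d hd ⟨hd1, hdq⟩
    have := (Nat.div_eq_one_iff_of_dvd hq0 (Nat.dvd_of_mem_divisors hd)).not.2 hdq
    have := Nat.div_le_self q d
    simp [memWeight, nonmemWeight, hd1]
    omega

theorem weightCount_of_dvd {q d : ℕ} (hq : q ≠ 0) (hd : d ∣ q) (hd1 : d ≠ 1) (hdq : d ≠ q) :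
    weightCount q (q - q / d + 1) = d * Nat.totient d := by
  have hmem : d ∈ q.divisors := Nat.mem_divisors.2 ⟨hd, hq⟩
  have hle : q / d ≤ q := Nat.div_le_self q d
  have hpos : 0 < q / d := Nat.div_pos (Nat.divisor_le hmem) (Nat.pos_of_mem_divisors hmem)
  have hdiv : q / d ≠ 1 := (Nat.div_eq_one_iff_of_dvd hq hd).not.2 hdq
  rw [weightCount, sum_eq_single_of_mem d hmem]
  · simp only [memWeight, nonmemWeight, hd1, if_false]
    rw [if_pos (by omega), if_neg (by omega), add_zero, mul_comm]
  · intro e he hed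
    have := (Nat.div_eq_iff_eq_of_dvd_dvd hq (Nat.dvd_of_mem_divisors he) hd).not.2 hed
    have := Nat.div_le_self q e
    by_cases he1 : e = 1 <;> simp [memWeight, nonmemWeight, he1] <;> omega

theorem weightCount_succ_self (q : ℕ) :
    weightCount q (q + 1) =
      q * (q - 1) - ∑ d ∈ q.divisors.filter (fun d => d ≠ 1), d * Nat.totient d := by
  rw [← Nat.sum_divisors_ne_one_totient_mul_sub, weightCount, sum_filter]
  refine sum_congr rfl fun d hd => ?_
  have := Nat.div_pos (Nat.divisor_le hd) (Nat.pos_of_mem_divisors hd)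
  by_cases hd1 : d = 1 <;> simp [memWeight, nonmemWeight, hd1]
  omega

end SimplexTwo

/-- The weight distribution of the `ZMod q`-Simplex code of dimension 2:
`A_0 = 1`, `A_q = q·φ(q) + q − 1`, `A_{q − q/d + 1} = d·φ(d)` for every divisor
`d` of `q` with `d ≠ 1, d ≠ q`, and `A_{q+1} = q(q − 1) − Σ_{d ∣ q, d ≠ 1} d·φ(d)`. -/
theorem simplex_two_weight_distribution (q : ℕ) (hq : 2 ≤ q) :
    ({w ∈ simplex q 2 | wt w = 0}).ncard = 1 ∧
    ({w ∈ simplex q 2 | wt w = q}).ncard = q * Nat.totient q + q - 1 ∧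
    (∀ d : ℕ, d ∣ q → d ≠ 1 → d ≠ q →
      ({w ∈ simplex q 2 | wt w = q - q / d + 1}).ncard = d * Nat.totient d) ∧
    ({w ∈ simplex q 2 | wt w = q + 1}).ncard =
      q * (q - 1) - ∑ d ∈ q.divisors.filter (fun d => d ≠ 1), d * Nat.totient d := by
  have hq0 : q ≠ 0 := by omega
  have : NeZero q := ⟨hq0⟩
  simp only [SimplexTwo.ncard_wt_eq]
  exact ⟨SimplexTwo.weightCount_zero hq0, SimplexTwo.weightCount_self hq,
    fun d hd hd1 hdq => SimplexTwo.weightCount_of_dvd hq0 hd hd1 hdq,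
    SimplexTwo.weightCount_succ_self q⟩
end

section
/- The weight distribution {A_i} of the Z_4-Simplex code S_3(4) of dimension 3 is: A_0 = 1, A_11 = 4, A_12 = 2, A_16 = 43, A_17 = 8, A_19 = 4, A_20 = 2, and A_i = 0 for all other i. -/
def simplexFinset (q : ℕ) [NeZero q] : ℕ → Finset (List (ZMod q))
  | 0 => {[]}
  | k + 1 => (simplexFinset q k ×ˢ Finset.univ).image fun p => simplexWord q p.2 p.1

theorem coe_simplexFinset (q : ℕ) [NeZero q] (k : ℕ) :
    (simplexFinset q k : Set (List (ZMod q))) = simplex q k := by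
  induction k with
  | zero => simp [simplexFinset, simplex]
  | succ k ih =>
    ext w
    simp [simplexFinset, simplex, ← ih, eq_comm]

theorem ncard_filter_eq_count_map {α β : Type*} [DecidableEq β] (s : Finset α) (f : α → β)
    (b : β) : {x ∈ (s : Set α) | f x = b}.ncard = (s.val.map f).count b := by
  classical
  have hfilter : {x ∈ (s : Set α) | f x = b} = ↑(s.filter (f · = b)) := by ext; simp
  rw [hfilter, Set.ncard_coe_finset, Multiset.count_map, Finset.card_def, Finset.filter_val]
  simp_rw [eq_comm]

theorem simplexFinset_four_three_weights :
    (simplexFinset 4 3).val.map wt =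
      {0} + .replicate 4 11 + .replicate 2 12 + .replicate 43 16 + .replicate 8 17 +
        .replicate 4 19 + .replicate 2 20 := by
  decide +kernel

/-- The weight distribution of the `ZMod 4`-Simplex code of dimension 3:
`A_0 = 1, A_11 = 4, A_12 = 2, A_16 = 43, A_17 = 8, A_19 = 4, A_20 = 2`,
and `A_i = 0` for all other `i`. -/
theorem simplex_four_three_weight_distribution :
    ∀ i : ℕ, ({w ∈ simplex 4 3 | wt w = i}).ncard =
      if i = 0 then 1 else if i = 11 then 4 else if i = 12 then 2 else if i = 16 then 43
      else if i = 17 then 8 else if i = 19 then 4 else if i = 20 then 2 else 0 := by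
  intro i
  rw [← coe_simplexFinset, ncard_filter_eq_count_map]
  simp only [simplexFinset_four_three_weights, Multiset.count_add, Multiset.count_singleton,
    Multiset.count_replicate, eq_comm (b := i)]
  split_ifs <;> omega
end

section
/- Let q ≥ 2 and k ≥ 2 be integers and set n = (q^{k−1} − 1)/(q − 1). For every unit α of Z_q (i.e. gcd(α, q) = 1) and every c ∈ S_{k−1}(q), the codeword (α, c + α·𝟏, c + 2α·𝟏, …, c + (q−1)α·𝟏) of M_{k,k−1}(q) has Hamming weight 1 + (q − 2)·n + z(c), where z(c) is the number of zero coordinates of c. -/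
/-!
Inside the block `c + j • α` (`j = 1, …, q - 1`) a coordinate `x` of `c` vanishes exactly for
`j = -x α⁻¹`. As `α` is a unit, this `j` is a nonzero scalar precisely when `x ≠ 0`, so the blocks
contain exactly `wt c` zeros in total. The word has length `1 + (q - 1) |c|` with `|c|` a geometric
sum, and its leading letter `α` is nonzero, so its weight is
`1 + (q - 1) |c| - wt c = 1 + (q - 2) |c| + z(c)`.
-/

theorem List.sum_map_boole_eq_countP {α : Type*} (l : List α) (p : α → Prop) [DecidablePred p] :
    (l.map fun a => if p a then 1 else 0).sum = l.countP (p ·) := by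
  induction l with
  | nil => rfl
  | cons a l ih => simp [List.countP_cons, ih, Nat.add_comm]

theorem List.sum_map_countP_comm {α β : Type*} (l : List α) (m : List β) (p : α → β → Bool) :
    (l.map fun a => m.countP (p a)).sum = (m.map fun b => l.countP (p · b)).sum := by
  induction m with
  | nil => simp
  | cons b m ih =>
    simp only [List.countP_cons, List.sum_map_add, ih, List.sum_map_boole_eq_countP,
      Bool.decide_eq_true, List.map_cons, List.sum_cons, Nat.add_comm]

section

variable {q : ℕ}

theorem wt_add_count_zero (l : List (ZMod q)) : wt l + l.count 0 = l.length := by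
  rw [wt, List.length_eq_countP_add_countP (· ≠ 0), List.count]
  congr 2
  ext x
  simp [beq_eq_decide]

theorem length_simplex_eq_geom_sum {k : ℕ} (hq : q ≠ 0) {c : List (ZMod q)}
    (hc : c ∈ simplex q k) : c.length = ∑ i ∈ Finset.range k, q ^ i := by
  induction k generalizing c with
  | zero => simp_all [simplex]
  | succ k ih =>
    obtain ⟨c, hc, α, rfl⟩ := hc
    have hlen : (simplexWord q α c).length = q * c.length + 1 := by
      obtain ⟨p, rfl⟩ := Nat.exists_eq_succ_of_ne_zero hq
      simp [simplexWord, List.length_flatMap]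
      ring
    rw [hlen, ih hc, Finset.mul_sum, Finset.sum_range_succ', pow_zero]
    simp [pow_succ, mul_comm]

def nonzeroScalars (q : ℕ) : List (ZMod q) :=
  (List.range (q - 1)).map fun i => ((i + 1 : ℕ) : ZMod q)

theorem nodup_nonzeroScalars : (nonzeroScalars q).Nodup := by
  refine List.Nodup.map_on (fun i hi j hj hij => ?_) List.nodup_range
  simp only [List.mem_range] at hi hj
  have := congrArg ZMod.val hij
  rw [ZMod.val_natCast_of_lt (by omega), ZMod.val_natCast_of_lt (by omega)] at this
  omega

theorem mem_nonzeroScalars [NeZero q] {j : ZMod q} : j ∈ nonzeroScalars q ↔ j ≠ 0 := by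
  simp only [nonzeroScalars, List.mem_map, List.mem_range]
  constructor
  · rintro ⟨i, hi, rfl⟩
    rw [Ne, ← ZMod.val_eq_zero, ZMod.val_natCast_of_lt (by omega)]
    omega
  · intro hj
    have := (ZMod.val_ne_zero j).2 hj
    refine ⟨j.val - 1, by have := j.val_lt; omega, ?_⟩
    rw [Nat.sub_add_cancel (by omega), ZMod.natCast_zmod_val]

theorem count_nonzeroScalars [NeZero q] (j : ZMod q) :
    (nonzeroScalars q).count j = if j = 0 then 0 else 1 := by
  split_ifs with hj
  · exact List.count_eq_zero_of_not_mem (by simp [mem_nonzeroScalars, hj])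
  · exact List.count_eq_one_of_mem nodup_nonzeroScalars (mem_nonzeroScalars.2 hj)

theorem macWord_eq (α : ZMod q) (c : List (ZMod q)) :
    macWord q α c = α :: (nonzeroScalars q).flatMap fun j => c.map (· + j * α) := by
  simp [macWord, nonzeroScalars, List.flatMap_map]

theorem countP_nonzeroScalars_add_mul_eq_zero [NeZero q] {α : ZMod q} (hα : IsUnit α)
    (x : ZMod q) : (nonzeroScalars q).countP (fun j => x + j * α == 0) = if x ≠ 0 then 1 else 0 := by
  have hroot (j : ZMod q) : (x + j * α == 0) = (j == -x * ↑hα.unit⁻¹) := by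
    rw [Bool.eq_iff_iff, beq_iff_eq, beq_iff_eq, Units.eq_mul_inv_iff_mul_eq, IsUnit.unit_spec,
      eq_neg_iff_add_eq_zero, add_comm]
  rw [List.countP_congr fun j _ => by rw [hroot], ← List.count, count_nonzeroScalars]
  simp

theorem count_zero_macWord [Fact (1 < q)] {α : ZMod q} (hα : IsUnit α) (c : List (ZMod q)) :
    (macWord q α c).count 0 = wt c := by
  rw [macWord_eq, List.count_cons, List.count_flatMap]
  simp only [List.count, Function.comp_def, List.countP_map, List.sum_map_countP_comm, countP_nonzeroScalars_add_mul_eq_zero hα, beq_iff_eq,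
    hα.ne_zero, if_false, add_zero]
  exact List.sum_map_boole_eq_countP c _

theorem length_macWord (α : ZMod q) (c : List (ZMod q)) :
    (macWord q α c).length = 1 + (q - 1) * c.length := by
  simp [macWord, List.length_flatMap, add_comm]

theorem wt_macWord [Fact (1 < q)] {α : ZMod q} (hα : IsUnit α) (c : List (ZMod q)) :
    wt (macWord q α c) = 1 + (q - 2) * c.length + c.count 0 := by
  have hword := wt_add_count_zero (macWord q α c)
  have hc := wt_add_count_zero c
  rw [count_zero_macWord hα, length_macWord] at hword
  have hq : q - 1 = q - 2 + 1 := by have := (Fact.out : 1 < q); omega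
  rw [hq, add_one_mul] at hword
  omega

end

theorem macdonald_unit_weight_general (q k : ℕ) (hq : 2 ≤ q)
    (α : ZMod q) (hα : IsUnit α) (c : List (ZMod q)) (hc : c ∈ simplex q (k - 1)) :
    wt (macWord q α c) = 1 + (q - 2) * ((q ^ (k - 1) - 1) / (q - 1)) + c.count 0 := by
  have : Fact (1 < q) := ⟨hq⟩
  rw [wt_macWord hα, length_simplex_eq_geom_sum (by omega) hc, Nat.geomSum_eq hq]

/-- For a unit `α` of `ZMod q` and `c ∈ S_{k−1}(q)`, the codeword
`(α, c + α·𝟏, …, c + (q−1)α·𝟏)` of `M_{k,k−1}(q)` has Hamming weight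
`1 + (q − 2)·n + z(c)`, where `n = (q^{k−1} − 1)/(q − 1)` and `z(c)` is
the number of zero coordinates of `c`. -/
theorem macdonald_unit_weight (q k : ℕ) (hq : 2 ≤ q) (hk : 2 ≤ k)
    (α : ZMod q) (hα : IsUnit α) (c : List (ZMod q)) (hc : c ∈ simplex q (k - 1)) :
    wt (macWord q α c) = 1 + (q - 2) * ((q ^ (k - 1) - 1) / (q - 1)) + c.count 0 :=
  macdonald_unit_weight_general q k hq α hα c hc
end

section
/- Let q ≥ 2 and k ≥ 3 be integers and let α be any nonzero element of Z_q. Then there exists a nonzero codeword c ∈ S_{k−1}(q) all of whose coordinates lie in the cyclic subgroup ⟨α⟩ of (Z_q, +) generated by α, such that c has exactly (q^{k−2} − 1)/(q − 1) zero coordinates. -/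
/-!
Start from the one-coordinate codeword `[α] ∈ S_1(q)` and apply the simplex extension
`c ↦ (c, 0, c, …, c)` with coefficient `0` a total of `k − 2` times. Every step keeps the
coordinates inside `{0, α} ⊆ ⟨α⟩` and keeps `α` itself, while the number `z` of zeros
becomes `q z + 1`; so after `m` steps there are `1 + q + ⋯ + q^{m−1} = (q^m − 1)/(q − 1)`
zeros.
-/

open Finset

section SimplexWord

variable {q : ℕ}

lemma simplexWord_mem_simplex {k : ℕ} {c : List (ZMod q)} (hc : c ∈ simplex q k)
    (β : ZMod q) : simplexWord q β c ∈ simplex q (k + 1) :=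
  ⟨c, hc, β, rfl⟩

lemma singleton_mem_simplex_one (α : ZMod q) : [α] ∈ simplex q 1 :=
  ⟨[], rfl, α, by simp [simplexWord]⟩

lemma subset_simplexWord (β : ZMod q) (c : List (ZMod q)) : c ⊆ simplexWord q β c :=
  List.subset_append_left _ _

lemma forall_mem_simplexWord {H : AddSubgroup (ZMod q)} {β : ZMod q} {c : List (ZMod q)}
    (hβ : β ∈ H) (hc : ∀ x ∈ c, x ∈ H) : ∀ x ∈ simplexWord q β c, x ∈ H := by
  intro x hx
  simp only [simplexWord, List.mem_append, List.mem_cons, List.mem_flatMap, List.mem_map] at hx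
  rcases hx with hx | rfl | ⟨i, -, y, hy, rfl⟩
  · exact hc x hx
  · exact hβ
  · have hiβ : ((i + 1 : ℕ) : ZMod q) * β ∈ H := by
      simpa only [nsmul_eq_mul] using H.nsmul_mem hβ (i + 1)
    exact H.add_mem (hc y hy) hiβ

lemma count_zero_simplexWord_zero [NeZero q] (c : List (ZMod q)) :
    (simplexWord q 0 c).count 0 = q * c.count 0 + 1 := by
  obtain ⟨p, rfl⟩ := Nat.exists_eq_succ_of_ne_zero (NeZero.ne q)
  simp only [simplexWord, mul_zero, add_zero, List.map_id', List.count_append,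
    List.count_cons_self, List.count_flatMap, Function.comp_def, List.map_const',
    List.sum_replicate, List.length_range, smul_eq_mul, Nat.succ_sub_one, Nat.succ_eq_add_one]
  ring

lemma iterate_simplexWord_mem_simplex {k : ℕ} {c : List (ZMod q)} (hc : c ∈ simplex q k)
    (β : ZMod q) (m : ℕ) : (simplexWord q β)^[m] c ∈ simplex q (k + m) := by
  induction m with
  | zero => exact hc
  | succ m ih =>
    rw [Function.iterate_succ_apply']
    exact simplexWord_mem_simplex ih β

lemma subset_iterate_simplexWord (β : ZMod q) (c : List (ZMod q)) (m : ℕ) :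
    c ⊆ (simplexWord q β)^[m] c := by
  induction m with
  | zero => exact List.Subset.refl c
  | succ m ih =>
    rw [Function.iterate_succ_apply']
    exact List.Subset.trans ih (subset_simplexWord β _)

lemma forall_mem_iterate_simplexWord {H : AddSubgroup (ZMod q)} {β : ZMod q}
    {c : List (ZMod q)} (hβ : β ∈ H) (hc : ∀ x ∈ c, x ∈ H) (m : ℕ) :
    ∀ x ∈ (simplexWord q β)^[m] c, x ∈ H := by
  induction m with
  | zero => exact hc
  | succ m ih =>
    rw [Function.iterate_succ_apply']
    exact forall_mem_simplexWord hβ ih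

lemma count_zero_iterate_simplexWord_zero [NeZero q] (c : List (ZMod q)) (m : ℕ) :
    ((simplexWord q 0)^[m] c).count 0 = q ^ m * c.count 0 + ∑ i ∈ range m, q ^ i := by
  induction m with
  | zero => simp
  | succ m ih =>
    rw [Function.iterate_succ_apply', count_zero_simplexWord_zero, ih, geom_sum_succ]
    ring

lemma wt_ne_zero_of_mem {l : List (ZMod q)} {x : ZMod q} (hx : x ∈ l) (hx0 : x ≠ 0) :
    wt l ≠ 0 :=
  (List.countP_pos_iff.mpr ⟨x, hx, by simpa using hx0⟩).ne'

end SimplexWord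

/-- For every nonzero `α ∈ ZMod q` there is a nonzero codeword `c ∈ S_{k−1}(q)` all
of whose coordinates lie in the additive subgroup `⟨α⟩`, having exactly
`(q^{k−2} − 1)/(q − 1)` zero coordinates. -/
theorem simplex_exists_subgroup_codeword (q k : ℕ) (hq : 2 ≤ q) (hk : 3 ≤ k)
    (α : ZMod q) (hα : α ≠ 0) :
    ∃ c ∈ simplex q (k - 1), wt c ≠ 0 ∧ (∀ x ∈ c, x ∈ AddSubgroup.zmultiples α) ∧
      c.count 0 = (q ^ (k - 2) - 1) / (q - 1) := by
  obtain ⟨m, rfl⟩ : ∃ m, k = m + 2 := ⟨k - 2, by omega⟩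
  have : NeZero q := ⟨by omega⟩
  refine ⟨(simplexWord q 0)^[m] [α], ?_, ?_, ?_, ?_⟩
  · simpa [add_comm] using iterate_simplexWord_mem_simplex (singleton_mem_simplex_one α) 0 m
  · exact wt_ne_zero_of_mem (subset_iterate_simplexWord 0 [α] m (List.mem_singleton_self α)) hα
  · exact forall_mem_iterate_simplexWord (AddSubgroup.zero_mem _) (by simp) m
  · rw [count_zero_iterate_simplexWord_zero, Nat.geomSum_eq hq]
    simp [hα]
end
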